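/- Let Q be the quiver Ã_{p,p} and let σ be the quiver automorphism fixing the vertices 1 and p+1 and interchanging vertex i with vertex 2p+2−i for 2 ≤ i ≤ p, which interchanges the arrow a_i with the arrow b_i for each i. Then for any grading d : Q₁ → ℤ one has w(d ∘ σ) = −w(d). Consequently, two gradings d₁, d₂ on Ã_{p,p} are equivalent up to an automorphism of Q if and only if |w(d₁)| = |w(d₂)|. -/

import Mathlib

/-- Source map of the quiver `Ã_{p,q}` (vertices `0, …, p+q-1` in `ZMod (p+q)`). -/
def srcA (p q : ℕ) : Fin p ⊕ Fin q → ZMod (p + q)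
  | Sum.inl i => ((i : ℕ) : ZMod (p + q))
  | Sum.inr j => ((p + (j : ℕ) + 1 : ℕ) : ZMod (p + q))

/-- Target map of the quiver `Ã_{p,q}`. -/
def tgtA (p q : ℕ) : Fin p ⊕ Fin q → ZMod (p + q)
  | Sum.inl i => (((i : ℕ) + 1 : ℕ) : ZMod (p + q))
  | Sum.inr j => ((p + (j : ℕ) : ℕ) : ZMod (p + q))

/-- The weight of a grading `d` on `Ã_{p,q}`: `Σ d(aᵢ) - Σ d(bⱼ)`. -/
def wtA (p q : ℕ) (d : Fin p ⊕ Fin q → ℤ) : ℤ :=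
  (∑ i : Fin p, d (Sum.inl i)) - ∑ j : Fin q, d (Sum.inr j)

/-- The nontrivial automorphism `σ` of `Ã_{p,p}` on arrows: it interchanges the
`p`-arrow `aᵢ` with the `q`-arrow `bᵢ` (in reversed order, corresponding to the
vertex map `v ↦ -v` fixing the vertices `0` and `p`). -/
def sigmaA (p : ℕ) : Fin p ⊕ Fin p → Fin p ⊕ Fin p
  | Sum.inl i => Sum.inr i.rev
  | Sum.inr j => Sum.inl j.rev

/-- Graded equivalence of two gradings on `Ã_{p,p}`. -/
def gradedEquivA (p : ℕ) (d₁ d₂ : Fin p ⊕ Fin p → ℤ) : Prop :=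
  ∃ r : ZMod (p + p) → ℤ, ∀ a, d₂ a = d₁ a + (r (tgtA p p a) - r (srcA p p a))

/-!
Gradings on `Ã_{p,q}` modulo equivalence are classified by the weight: the difference of two
gradings is a `1`-cochain on a cycle, and such a cochain is a coboundary exactly when its
oriented sum around the cycle vanishes (the potential is its sequence of partial sums). Since
`σ` swaps the `a`-arrows with the `b`-arrows, it negates the weight.
-/

open Finset

section Cycle

variable {G : Type*} [AddCommGroup G] {n : ℕ}

theorem exists_potential_iff_sum_eq_zero (c : Fin n → G) :
    (∃ r : ZMod n → G, ∀ k : Fin n, c k = r ((k + 1 : ℕ) : ZMod n) - r ((k : ℕ) : ZMod n)) ↔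
      ∑ k, c k = 0 := by
  set c' : ℕ → G := fun k => if h : k < n then c ⟨k, h⟩ else 0
  have hsum : ∑ k ∈ range n, c' k = ∑ k, c k := by
    rw [← Fin.sum_univ_eq_sum_range]
    simp [c']
  constructor
  · rintro ⟨r, hr⟩
    calc ∑ k, c k = ∑ k ∈ range n, (r ((k + 1 : ℕ) : ZMod n) - r ((k : ℕ) : ZMod n)) := by
          rw [← Fin.sum_univ_eq_sum_range (fun k => r ((k + 1 : ℕ) : ZMod n) - r (k : ℕ))]
          exact sum_congr rfl fun k _ => hr k
      _ = r (n : ZMod n) - r ((0 : ℕ) : ZMod n) := sum_range_sub (fun k => r (k : ZMod n)) n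
      _ = 0 := by rw [ZMod.natCast_self, Nat.cast_zero, sub_self]
  · intro hc
    refine ⟨fun v => ∑ k ∈ range v.val, c' k, fun k => ?_⟩
    -- at `m = n` the vertex wraps around to `0`, where the total sum `0` is also the right value
    have hpot : ∀ m ≤ n, ∑ k ∈ range (m : ZMod n).val, c' k = ∑ k ∈ range m, c' k := by
      intro m hm
      rcases hm.lt_or_eq with hm | rfl
      · rw [ZMod.val_natCast, Nat.mod_eq_of_lt hm]
      · rw [ZMod.natCast_self, ZMod.val_zero, hsum, hc, sum_range_zero]
    dsimp only
    rw [hpot (k + 1) k.isLt, hpot k k.isLt.le, sum_range_succ, add_sub_cancel_left]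
    simp [c']

end Cycle

/-- The oriented values of a cochain `e` on the arrows of `Ã_{p,q}`, read along the cycle
`0 → 1 → ⋯ → p+q-1 → 0`: the `b`-arrows run against this orientation. -/
def cycleFlow (p q : ℕ) (e : Fin p ⊕ Fin q → ℤ) : Fin (p + q) → ℤ :=
  Fin.append (fun i => e (Sum.inl i)) (fun j => -e (Sum.inr j))

theorem sum_cycleFlow (p q : ℕ) (e : Fin p ⊕ Fin q → ℤ) :
    ∑ k, cycleFlow p q e k = wtA p q e := by
  simp [cycleFlow, Fin.sum_univ_add, wtA, sub_eq_add_neg]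

theorem wtA_sub (p q : ℕ) (d₁ d₂ : Fin p ⊕ Fin q → ℤ) :
    wtA p q (d₂ - d₁) = wtA p q d₂ - wtA p q d₁ := by
  simp only [wtA, Pi.sub_apply, sum_sub_distrib]
  ring

theorem exists_potential_iff_wtA_eq (p q : ℕ) (d₁ d₂ : Fin p ⊕ Fin q → ℤ) :
    (∃ r : ZMod (p + q) → ℤ, ∀ a, d₂ a = d₁ a + (r (tgtA p q a) - r (srcA p q a))) ↔
      wtA p q d₁ = wtA p q d₂ := by
  have hflow : (∃ r : ZMod (p + q) → ℤ, ∀ a, d₂ a = d₁ a + (r (tgtA p q a) - r (srcA p q a))) ↔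
      ∃ r : ZMod (p + q) → ℤ, ∀ k : Fin (p + q),
        cycleFlow p q (d₂ - d₁) k = r ((k + 1 : ℕ) : ZMod (p + q)) - r ((k : ℕ) : ZMod (p + q)) := by
    refine exists_congr fun r => ?_
    rw [Sum.forall, Fin.forall_fin_add]
    simp only [cycleFlow, Fin.append_left, Fin.append_right, Fin.val_castAdd, Fin.val_natAdd,
      srcA, tgtA, Pi.sub_apply]
    refine and_congr (forall_congr' fun i => ?_) (forall_congr' fun j => ?_) <;>
      constructor <;> intro h <;> linarith
  rw [hflow, exists_potential_iff_sum_eq_zero, sum_cycleFlow, wtA_sub, sub_eq_zero, eq_comm]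

theorem gradedEquivA_iff_wtA_eq (p : ℕ) (d₁ d₂ : Fin p ⊕ Fin p → ℤ) :
    gradedEquivA p d₁ d₂ ↔ wtA p p d₁ = wtA p p d₂ :=
  exists_potential_iff_wtA_eq p p d₁ d₂

theorem wtA_comp_sigmaA (p : ℕ) (d : Fin p ⊕ Fin p → ℤ) :
    wtA p p (d ∘ sigmaA p) = -wtA p p d := by
  simp only [wtA, sigmaA, Function.comp_apply]
  rw [Fintype.sum_equiv Fin.revPerm (fun i => d (Sum.inr i.rev)) (fun i => d (Sum.inr i))
      fun _ => rfl,
    Fintype.sum_equiv Fin.revPerm (fun j => d (Sum.inl j.rev)) (fun j => d (Sum.inl j))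
      fun _ => rfl]
  ring

theorem weight_automorphism_abs_general (p : ℕ) :
    (∀ d : Fin p ⊕ Fin p → ℤ, wtA p p (d ∘ sigmaA p) = - wtA p p d) ∧
    (∀ d₁ d₂ : Fin p ⊕ Fin p → ℤ,
      (gradedEquivA p d₁ d₂ ∨ gradedEquivA p d₁ (d₂ ∘ sigmaA p)) ↔
        |wtA p p d₁| = |wtA p p d₂|) := by
  refine ⟨wtA_comp_sigmaA p, fun d₁ d₂ => ?_⟩
  rw [gradedEquivA_iff_wtA_eq, gradedEquivA_iff_wtA_eq, wtA_comp_sigmaA, abs_eq_abs]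

/-- composing a grading on `Ã_{p,p}` with the automorphism `σ` negates
the weight; consequently two gradings are equivalent up to an automorphism of the
quiver iff their weights have the same absolute value. -/
theorem weight_automorphism_abs (p : ℕ) (hp : 1 ≤ p) :
    (∀ d : Fin p ⊕ Fin p → ℤ, wtA p p (d ∘ sigmaA p) = - wtA p p d) ∧
    (∀ d₁ d₂ : Fin p ⊕ Fin p → ℤ,
      (gradedEquivA p d₁ d₂ ∨ gradedEquivA p d₁ (d₂ ∘ sigmaA p)) ↔
        |wtA p p d₁| = |wtA p p d₂|) :=
  weight_automorphism_abs_general p
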